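/- For c ∈ (0, 1/2), with parameters γ1 = c/(1+c), γ2 = 2c/(1+c), the mean of the Wachter distribution W(λ; γ1, γ2) equals 2c/(1+c); i.e., ∫ λ dW(λ; c/(1+c), 2c/(1+c)) = 2c/(1+c). -/

import Mathlib

open Real

/-! Multiplying by `λ` cancels the pole of the Wachter density at `0`, so the mean is
`(2πγ₁)⁻¹ ∫_{b₋}^{b₊} √((b₊ - λ)(λ - b₋)) / (1 - λ) dλ`. This integral has an elementary
primitive (a square root and two arcsines) and equals `π (1 - (b₋ + b₊)/2 - √((1 - b₋)(1 - b₊)))`.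
Since `b₋ + b₊ = 2(γ₁ + γ₂ - 2γ₁γ₂)` and `(1 - b₋)(1 - b₊) = (1 - γ₁ - γ₂)²`, the mean is `γ₂`. -/

lemma HasDerivAt.arcsin_of_one_sub_sq_eq {g : ℝ → ℝ} {g' s x : ℝ} (hg : HasDerivAt g g' x)
    (hs : 0 < s) (h : 1 - g x ^ 2 = s ^ 2) :
    HasDerivAt (fun y => arcsin (g y)) (g' / s) x := by
  have hlt : g x ^ 2 < 1 := by nlinarith
  have hne₁ : g x ≠ -1 := by rintro hx; rw [hx] at hlt; norm_num at hlt
  have hne₂ : g x ≠ 1 := by rintro hx; rw [hx] at hlt; norm_num at hlt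
  have hsqrt : √(1 - g x ^ 2) = s := by rw [h, sqrt_sq hs.le]
  exact ((hasDerivAt_arcsin hne₁ hne₂).comp x hg).congr_deriv (by rw [hsqrt]; ring)

section Primitive

variable {a b x : ℝ}

lemma hasDerivAt_sqrt_sub_mul_sub (hx : x ∈ Set.Ioo a b) :
    HasDerivAt (fun y => √((b - y) * (y - a)))
      ((a + b - 2 * x) / (2 * √((b - x) * (x - a)))) x := by
  have hpos : 0 < (b - x) * (x - a) := mul_pos (by linarith [hx.2]) (by linarith [hx.1])
  have hp : HasDerivAt (fun y => (b - y) * (y - a)) (a + b - 2 * x) x := by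
    have := ((hasDerivAt_id x).const_sub b).mul ((hasDerivAt_id x).sub_const a)
    exact this.congr_deriv (by simp only [id_eq]; ring)
  exact hp.sqrt hpos.ne'

lemma hasDerivAt_arcsin_affine (hx : x ∈ Set.Ioo a b) :
    HasDerivAt (fun y => arcsin ((2 * y - a - b) / (b - a))) (1 / √((b - x) * (x - a))) x := by
  have hba : 0 < b - a := by linarith [hx.1, hx.2]
  have hpos : 0 < (b - x) * (x - a) := mul_pos (by linarith [hx.2]) (by linarith [hx.1])
  set R := √((b - x) * (x - a))
  have hR : 0 < R := sqrt_pos.mpr hpos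
  have hR2 : R ^ 2 = (b - x) * (x - a) := sq_sqrt hpos.le
  have hg : HasDerivAt (fun y => (2 * y - a - b) / (b - a)) (2 / (b - a)) x := by
    have := (((hasDerivAt_id x).const_mul 2).sub_const (a + b)).div_const (b - a)
    exact (this.congr_deriv (by ring)).congr_of_eventuallyEq
      (Filter.Eventually.of_forall fun y => by simp only [id_eq]; ring)
  have h := hg.arcsin_of_one_sub_sq_eq (s := 2 * R / (b - a)) (by positivity)
    (by field_simp; rw [hR2]; ring)
  convert h using 1
  field_simp

lemma hasDerivAt_arcsin_moebius (hx : x ∈ Set.Ioo a b) (hb : b < 1) :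
    HasDerivAt (fun y => arcsin (((1 - b) * (y - a) - (1 - a) * (b - y)) / ((b - a) * (1 - y))))
      (√((1 - a) * (1 - b)) / (√((b - x) * (x - a)) * (1 - x))) x := by
  obtain ⟨hax, hxb⟩ := hx
  have hba : 0 < b - a := by linarith
  have h1x : 0 < 1 - x := by linarith
  have hpos : 0 < (b - x) * (x - a) := mul_pos (by linarith) (by linarith)
  have hqpos : 0 < (1 - a) * (1 - b) := mul_pos (by linarith) (by linarith)
  set R := √((b - x) * (x - a))
  set q := √((1 - a) * (1 - b))
  have hR : 0 < R := sqrt_pos.mpr hpos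
  have hR2 : R ^ 2 = (b - x) * (x - a) := sq_sqrt hpos.le
  have hq : 0 < q := sqrt_pos.mpr hqpos
  have hq2 : q ^ 2 = (1 - a) * (1 - b) := sq_sqrt hqpos.le
  have hn : HasDerivAt (fun y => (1 - b) * (y - a) - (1 - a) * (b - y)) (2 - a - b) x := by
    have := (((hasDerivAt_id x).sub_const a).const_mul (1 - b)).sub
      (((hasDerivAt_id x).const_sub b).const_mul (1 - a))
    exact this.congr_deriv (by ring)
  have hd : HasDerivAt (fun y => (b - a) * (1 - y)) (-(b - a)) x := by
    have := ((hasDerivAt_id x).const_sub 1).const_mul (b - a)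
    exact this.congr_deriv (by ring)
  have hg : HasDerivAt (fun y => ((1 - b) * (y - a) - (1 - a) * (b - y)) / ((b - a) * (1 - y)))
      (((2 - a - b) * ((b - a) * (1 - x)) - ((1 - b) * (x - a) - (1 - a) * (b - x)) * -(b - a))
        / ((b - a) * (1 - x)) ^ 2) x :=
    hn.div hd (by positivity)
  have h := hg.arcsin_of_one_sub_sq_eq (s := 2 * q * R / ((b - a) * (1 - x))) (by positivity)
    (by field_simp; rw [hR2, hq2]; ring)
  convert h using 1
  field_simp
  rw [hq2]
  ring

-- The argument of the second arcsine is the Möbius map sending `a, b, 1` to `-1, 1, ∞`.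
variable (a b) in
noncomputable def sqrtDivOneSubPrimitive (x : ℝ) : ℝ :=
  -√((b - x) * (x - a)) + (1 - (a + b) / 2) * arcsin ((2 * x - a - b) / (b - a))
    - √((1 - a) * (1 - b)) *
      arcsin (((1 - b) * (x - a) - (1 - a) * (b - x)) / ((b - a) * (1 - x)))

lemma hasDerivAt_sqrtDivOneSubPrimitive (hx : x ∈ Set.Ioo a b) (hb : b < 1) :
    HasDerivAt (sqrtDivOneSubPrimitive a b) (√((b - x) * (x - a)) / (1 - x)) x := by
  have h1x : 0 < 1 - x := by linarith [hx.2]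
  have hpos : 0 < (b - x) * (x - a) := mul_pos (by linarith [hx.2]) (by linarith [hx.1])
  have hqpos : 0 ≤ (1 - a) * (1 - b) := mul_nonneg (by linarith [hx.1, hx.2]) (by linarith)
  have h := (((hasDerivAt_sqrt_sub_mul_sub hx).neg.add
    ((hasDerivAt_arcsin_affine hx).const_mul (1 - (a + b) / 2))).sub
    ((hasDerivAt_arcsin_moebius hx hb).const_mul √((1 - a) * (1 - b))))
  refine h.congr_deriv ?_
  field_simp
  rw [sq_sqrt hqpos, sq_sqrt hpos.le]
  ring

lemma continuousOn_sqrtDivOneSubPrimitive (hab : a < b) (hb : b < 1) :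
    ContinuousOn (sqrtDivOneSubPrimitive a b) (Set.Icc a b) := by
  have hden : ∀ x ∈ Set.Icc a b, (b - a) * (1 - x) ≠ 0 := fun x hx => by
    have : 0 < (b - a) * (1 - x) := mul_pos (by linarith) (by linarith [hx.2])
    exact this.ne'
  unfold sqrtDivOneSubPrimitive
  refine ContinuousOn.sub (by fun_prop) (continuousOn_const.mul
    (continuous_arcsin.comp_continuousOn (ContinuousOn.div (by fun_prop) (by fun_prop) hden)))

lemma sqrtDivOneSubPrimitive_left (hab : a < b) (hb : b < 1) :
    sqrtDivOneSubPrimitive a b a =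
      (1 - (a + b) / 2) * (-(π / 2)) + √((1 - a) * (1 - b)) * (π / 2) := by
  have e₁ : (2 * a - a - b) / (b - a) = -1 := by
    rw [div_eq_iff (by linarith)]; ring
  have e₂ : ((1 - b) * (a - a) - (1 - a) * (b - a)) / ((b - a) * (1 - a)) = -1 := by
    rw [div_eq_iff (by nlinarith)]; ring
  rw [sqrtDivOneSubPrimitive, e₁, e₂, arcsin_neg_one, sub_self, mul_zero, sqrt_zero]
  ring

lemma sqrtDivOneSubPrimitive_right (hab : a < b) (hb : b < 1) :
    sqrtDivOneSubPrimitive a b b =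
      (1 - (a + b) / 2) * (π / 2) - √((1 - a) * (1 - b)) * (π / 2) := by
  have e₁ : (2 * b - a - b) / (b - a) = 1 := by
    rw [div_eq_iff (by linarith)]; ring
  have e₂ : ((1 - b) * (b - a) - (1 - a) * (b - b)) / ((b - a) * (1 - b)) = 1 := by
    rw [div_eq_iff (by nlinarith)]; ring
  rw [sqrtDivOneSubPrimitive, e₁, e₂, arcsin_one, sub_self, zero_mul, sqrt_zero]
  ring

theorem integral_sqrt_mul_div_one_sub (hab : a < b) (hb : b < 1) :
    ∫ x in a..b, √((b - x) * (x - a)) / (1 - x) =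
      π * (1 - (a + b) / 2 - √((1 - a) * (1 - b))) := by
  have hint : IntervalIntegrable (fun x => √((b - x) * (x - a)) / (1 - x))
      MeasureTheory.volume a b := by
    refine ContinuousOn.intervalIntegrable (ContinuousOn.div (by fun_prop) (by fun_prop) ?_)
    intro x hx
    rw [Set.uIcc_of_le hab.le] at hx
    linarith [hx.2]
  rw [intervalIntegral.integral_eq_sub_of_hasDerivAt_of_le hab.le
    (continuousOn_sqrtDivOneSubPrimitive hab hb)
    (fun x hx => hasDerivAt_sqrtDivOneSubPrimitive hx hb) hint,
    sqrtDivOneSubPrimitive_left hab hb, sqrtDivOneSubPrimitive_right hab hb]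
  ring

end Primitive

noncomputable def wachterLower (γ₁ γ₂ : ℝ) : ℝ := (√(γ₁ * (1 - γ₂)) - √(γ₂ * (1 - γ₁))) ^ 2

noncomputable def wachterUpper (γ₁ γ₂ : ℝ) : ℝ := (√(γ₁ * (1 - γ₂)) + √(γ₂ * (1 - γ₁))) ^ 2

noncomputable def wachterDensity (γ₁ γ₂ l : ℝ) : ℝ :=
  (1 / (2 * π * γ₁)) * √((wachterUpper γ₁ γ₂ - l) * (l - wachterLower γ₁ γ₂)) / (l * (1 - l))

section Wachter

variable {γ₁ γ₂ : ℝ}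

lemma wachterLower_add_wachterUpper (h₁ : 0 ≤ γ₁ * (1 - γ₂)) (h₂ : 0 ≤ γ₂ * (1 - γ₁)) :
    wachterLower γ₁ γ₂ + wachterUpper γ₁ γ₂ = 2 * (γ₁ + γ₂ - 2 * γ₁ * γ₂) := by
  rw [wachterLower, wachterUpper]
  linear_combination 2 * sq_sqrt h₁ + 2 * sq_sqrt h₂

lemma one_sub_wachterLower_mul_one_sub_wachterUpper (h₁ : 0 ≤ γ₁ * (1 - γ₂))
    (h₂ : 0 ≤ γ₂ * (1 - γ₁)) :
    (1 - wachterLower γ₁ γ₂) * (1 - wachterUpper γ₁ γ₂) = (1 - γ₁ - γ₂) ^ 2 := by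
  have e₁ := sq_sqrt h₁
  have e₂ := sq_sqrt h₂
  rw [wachterLower, wachterUpper]
  set u := √(γ₁ * (1 - γ₂))
  set v := √(γ₂ * (1 - γ₁))
  have : (1 - (u - v) ^ 2) * (1 - (u + v) ^ 2) = (1 - u ^ 2 - v ^ 2) ^ 2 - 4 * u ^ 2 * v ^ 2 := by
    ring
  rw [this, e₁, e₂]
  ring

lemma wachterLower_pos (h₁ : 0 ≤ γ₁ * (1 - γ₂)) (h₂ : 0 ≤ γ₂ * (1 - γ₁)) (hne : γ₁ ≠ γ₂) :
    0 < wachterLower γ₁ γ₂ := by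
  refine sq_pos_of_ne_zero (sub_ne_zero.mpr fun h => hne ?_)
  rw [sqrt_inj h₁ h₂] at h
  linarith

lemma wachterLower_lt_wachterUpper (h₁ : 0 < γ₁ * (1 - γ₂)) (h₂ : 0 < γ₂ * (1 - γ₁)) :
    wachterLower γ₁ γ₂ < wachterUpper γ₁ γ₂ := by
  rw [wachterLower, wachterUpper]
  nlinarith [mul_pos (sqrt_pos.mpr h₁) (sqrt_pos.mpr h₂)]

lemma wachterUpper_lt_one (h₁ : 0 ≤ γ₁) (h₂ : 0 ≤ γ₂) (hsum : γ₁ + γ₂ < 1) :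
    wachterUpper γ₁ γ₂ < 1 := by
  have hp₁ : 0 ≤ γ₁ * (1 - γ₂) := mul_nonneg h₁ (by linarith)
  have hp₂ : 0 ≤ γ₂ * (1 - γ₁) := mul_nonneg h₂ (by linarith)
  have hprod := one_sub_wachterLower_mul_one_sub_wachterUpper hp₁ hp₂
  have hadd := wachterLower_add_wachterUpper hp₁ hp₂
  -- `1 - b₋` and `1 - b₊` have positive product and positive sum `2((1 - γ₁)(1 - γ₂) + γ₁γ₂)`.
  nlinarith [sq_pos_of_pos (show 0 < 1 - γ₁ - γ₂ by linarith), mul_nonneg h₁ h₂]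

theorem integral_mul_wachterDensity (h₁ : 0 < γ₁) (h₂ : 0 < γ₂) (hne : γ₁ ≠ γ₂)
    (hsum : γ₁ + γ₂ < 1) :
    ∫ l in wachterLower γ₁ γ₂..wachterUpper γ₁ γ₂, l * wachterDensity γ₁ γ₂ l = γ₂ := by
  have hp₁ : 0 < γ₁ * (1 - γ₂) := mul_pos h₁ (by linarith)
  have hp₂ : 0 < γ₂ * (1 - γ₁) := mul_pos h₂ (by linarith)
  have hL := wachterLower_pos hp₁.le hp₂.le hne
  have hLU := wachterLower_lt_wachterUpper hp₁ hp₂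
  have hU := wachterUpper_lt_one h₁.le h₂.le hsum
  have hcongr : Set.EqOn (fun l => l * wachterDensity γ₁ γ₂ l)
      (fun l => 1 / (2 * π * γ₁) *
        (√((wachterUpper γ₁ γ₂ - l) * (l - wachterLower γ₁ γ₂)) / (1 - l)))
      (Set.uIcc (wachterLower γ₁ γ₂) (wachterUpper γ₁ γ₂)) := by
    intro l hl
    rw [Set.uIcc_of_le hLU.le] at hl
    have hl₀ : l ≠ 0 := (hL.trans_le hl.1).ne'
    have hl₁ : 1 - l ≠ 0 := by linarith [hl.2]
    simp only [wachterDensity]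
    field_simp
  have hsqrt : √((1 - wachterLower γ₁ γ₂) * (1 - wachterUpper γ₁ γ₂)) = 1 - γ₁ - γ₂ := by
    rw [one_sub_wachterLower_mul_one_sub_wachterUpper hp₁.le hp₂.le, sqrt_sq (by linarith)]
  rw [intervalIntegral.integral_congr hcongr, intervalIntegral.integral_const_mul,
    integral_sqrt_mul_div_one_sub hLU hU, hsqrt, wachterLower_add_wachterUpper hp₁.le hp₂.le]
  field_simp
  ring

end Wachter

/-- For `c ∈ (0,1/2)` and `γ₁ = c/(1+c)`, `γ₂ = 2c/(1+c)`, the mean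
of the (atomless) Wachter distribution equals `2c/(1+c)`. -/
theorem stmt8 (c : ℝ) (hc : c ∈ Set.Ioo (0 : ℝ) (1/2))
    (γ₁ γ₂ : ℝ) (hγ₁ : γ₁ = c / (1 + c)) (hγ₂ : γ₂ = 2 * c / (1 + c))
    (bm bp : ℝ)
    (hbm : bm = (Real.sqrt (γ₁ * (1 - γ₂)) - Real.sqrt (γ₂ * (1 - γ₁))) ^ 2)
    (hbp : bp = (Real.sqrt (γ₁ * (1 - γ₂)) + Real.sqrt (γ₂ * (1 - γ₁))) ^ 2)
    (fW : ℝ → ℝ)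
    (hfW : ∀ l, fW l =
      (1 / (2 * Real.pi * γ₁)) * Real.sqrt ((bp - l) * (l - bm)) / (l * (1 - l))) :
    ∫ l in bm..bp, l * fW l = 2 * c / (1 + c) := by
  obtain ⟨hc₀, hc₁⟩ := hc
  have h1c : 0 < 1 + c := by linarith
  have hne : γ₁ ≠ γ₂ := by rw [hγ₁, hγ₂, Ne, div_left_inj' h1c.ne']; linarith
  have hsum : γ₁ + γ₂ < 1 := by rw [hγ₁, hγ₂, ← add_div, div_lt_one h1c]; linarith
  have hfW' : fW = wachterDensity γ₁ γ₂ := funext fun l => by rw [hfW, hbm, hbp]; rfl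
  rw [hfW', hbm, hbp, ← hγ₂]
  exact integral_mul_wachterDensity (by rw [hγ₁]; positivity) (by rw [hγ₂]; positivity) hne hsum
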